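/- If the noiseless sLORETA standardization is applied with the wrong lead field L' whose k-th column is proportional to the k-th column of the true lead field L used to generate y = L e_k (i.e., L' e_k = c L e_k for some c ≠ 0), and R' = L'^T(L'L'^T)^† L' has strictly positive diagonal, then the standardized score computed from L' still attains its maximum at index k provided additionally that (L'^T y)_j = R'_{jk}·c for all j; in particular s'_j = c² R'_{jk}²/R'_{jj} ≤ c² R'_{kk} = s'_k. -/

import Mathlib

/-!
The resolution matrix `R' = L'ᵀ P L'` is positive semidefinite: for the symmetric matrix
`M = L' L'ᵀ` the Penrose conditions give `P = P M Pᵀ`, hence `R' = (L'ᵀ P L') (L'ᵀ P L')ᵀ`.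
Under the hypothesis on `L'ᵀ y` the score at `j` is `c² R'_{jk}² / R'_{jj}`, and the
Cauchy–Schwarz inequality `R'_{jk}² ≤ R'_{jj} R'_{kk}` for positive semidefinite matrices bounds
it by `c² R'_{kk}`, the score at `k`.
-/

open Matrix

/-- `P` is the Moore–Penrose pseudoinverse of the square matrix `M`
(Penrose conditions). -/
def IsMoorePenrose {k : ℕ} (M P : Matrix (Fin k) (Fin k) ℝ) : Prop :=
  M * P * M = M ∧ P * M * P = P ∧ (M * P)ᵀ = M * P ∧ (P * M)ᵀ = P * M

theorem Matrix.PosSemidef.apply_sq_le {ι : Type*} [Fintype ι] {A : Matrix ι ι ℝ}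
    (hA : A.PosSemidef) (i j : ι) : A i j ^ 2 ≤ A i i * A j j := by
  have hminor := (hA.submatrix ![i, j]).det_nonneg
  have hsymm : A j i = A i j := hA.1.apply i j
  simp only [det_fin_two, submatrix_apply, Matrix.cons_val_zero, Matrix.cons_val_one] at hminor
  rw [hsymm, ← sq] at hminor
  linarith

namespace IsMoorePenrose

variable {k : ℕ} {M P : Matrix (Fin k) (Fin k) ℝ}

theorem mul_mul_transpose_eq (hP : IsMoorePenrose M P) (hM : Mᵀ = M) : P * M * Pᵀ = P := by
  obtain ⟨hMPM, hPMP, hMP, hPM⟩ := hP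
  have hMP' : Pᵀ * M = M * P := by rw [← hMP, transpose_mul, hM]
  have hPM' : M * Pᵀ = P * M := by rw [← hPM, transpose_mul, hM]
  symm
  calc P = P * (M * P) := by rw [← Matrix.mul_assoc, hPMP]
    _ = P * (Pᵀ * (M * P * M)) := by rw [hMPM, hMP']
    _ = P * (Pᵀ * M) * (P * M) := by simp only [Matrix.mul_assoc]
    _ = P * M * P * (P * M) := by rw [hMP']; simp only [Matrix.mul_assoc]
    _ = P * (M * Pᵀ) := by rw [hPMP, hPM']
    _ = P * M * Pᵀ := (Matrix.mul_assoc _ _ _).symm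

theorem posSemidef_transpose_mul_mul {m : ℕ} {A : Matrix (Fin k) (Fin m) ℝ}
    (hP : IsMoorePenrose (A * Aᵀ) P) : (Aᵀ * P * A).PosSemidef := by
  have hfactor : Aᵀ * P * A = (Aᵀ * P * A) * (Aᵀ * P * A)ᴴ := by
    conv_lhs => rw [← hP.mul_mul_transpose_eq (by rw [transpose_mul, transpose_transpose])]
    simp only [conjTranspose_eq_transpose_of_trivial, transpose_mul, transpose_transpose,
      Matrix.mul_assoc]
  rw [hfactor]
  exact posSemidef_self_mul_conjTranspose _

end IsMoorePenrose

theorem sloreta_mismatched_lead_field_general {m n : ℕ}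
    (L' : Matrix (Fin m) (Fin n) ℝ) (P : Matrix (Fin m) (Fin m) ℝ)
    (hP : IsMoorePenrose (L' * L'ᵀ) P)
    (R' : Matrix (Fin n) (Fin n) ℝ) (hR' : R' = L'ᵀ * P * L')
    (k : Fin n) (c : ℝ)
    (y : Fin m → ℝ)
    (hproj : ∀ j : Fin n, (L'ᵀ *ᵥ y) j = R' j k * c) :
    (∀ j : Fin n,
      ((L'ᵀ *ᵥ y) j) ^ 2 / R' j j = c ^ 2 * (R' j k) ^ 2 / R' j j) ∧
    (∀ j : Fin n, ((L'ᵀ *ᵥ y) j) ^ 2 / R' j j ≤ c ^ 2 * R' k k) ∧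
    ((L'ᵀ *ᵥ y) k) ^ 2 / R' k k = c ^ 2 * R' k k := by
  have hR'psd : R'.PosSemidef := hR' ▸ hP.posSemidef_transpose_mul_mul
  refine ⟨fun j => by rw [hproj j, mul_pow, mul_comm], fun j => ?_, ?_⟩
  · rw [hproj j]
    refine div_le_of_le_mul₀ hR'psd.diag_nonneg (mul_nonneg (sq_nonneg c) hR'psd.diag_nonneg) ?_
    calc (R' j k * c) ^ 2 = c ^ 2 * R' j k ^ 2 := by ring
      _ ≤ c ^ 2 * (R' j j * R' k k) := by gcongr; exact hR'psd.apply_sq_le j k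
      _ = c ^ 2 * R' k k * R' j j := by ring
  · rw [hproj k, show (R' k k * c) ^ 2 / R' k k = c ^ 2 * (R' k k * R' k k / R' k k) by ring,
      mul_self_div_self]

/-- sLORETA with a mismatched lead field. Suppose
`y = L e_k`, the wrong lead field `L'` has `L' e_k = c · L e_k` with `c ≠ 0`,
`R' = L'ᵀ (L' L'ᵀ)† L'` has strictly positive diagonal, and additionally
`(L'ᵀ y)_j = R'_{jk} · c` for all `j`. Then the standardized score
`s'_j = (L'ᵀ y)_j² / R'_{jj}` satisfies
`s'_j = c² R'_{jk}² / R'_{jj} ≤ c² R'_{kk} = s'_k`, so the score still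
attains its maximum at index `k`. -/
theorem sloreta_mismatched_lead_field {m n : ℕ}
    (L L' : Matrix (Fin m) (Fin n) ℝ) (P : Matrix (Fin m) (Fin m) ℝ)
    (hP : IsMoorePenrose (L' * L'ᵀ) P)
    (R' : Matrix (Fin n) (Fin n) ℝ) (hR' : R' = L'ᵀ * P * L')
    (hdiag : ∀ j, 0 < R' j j)
    (k : Fin n) (c : ℝ) (hc : c ≠ 0)
    (y : Fin m → ℝ) (hy : y = L *ᵥ (Pi.single k 1))
    (hprop : L' *ᵥ (Pi.single k 1 : Fin n → ℝ) = c • (L *ᵥ (Pi.single k 1)))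
    (hproj : ∀ j : Fin n, (L'ᵀ *ᵥ y) j = R' j k * c) :
    (∀ j : Fin n,
      ((L'ᵀ *ᵥ y) j) ^ 2 / R' j j = c ^ 2 * (R' j k) ^ 2 / R' j j) ∧
    (∀ j : Fin n, ((L'ᵀ *ᵥ y) j) ^ 2 / R' j j ≤ c ^ 2 * R' k k) ∧
    ((L'ᵀ *ᵥ y) k) ^ 2 / R' k k = c ^ 2 * R' k k :=
  sloreta_mismatched_lead_field_general L' P hP R' hR' k c y hproj
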